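/- arXiv:2306.06581 — 3 statements merged into one kernel-verified Lean document; each statement's English description precedes it below -/
import Mathlib

section
/- Let n ≥ 1, let ε, λ, c₆, c₇ > 0 with ε/λ ≤ c₆ and λ ≤ c₇ n^{−c₆}, let a, b ∈ ℝⁿ have nonnegative entries with ∑_i a_i + ∑_j b_j ≤ ε/(2c₇), and let K be an n×n real matrix with ∑_{i,j} K_{ij}/n² ≤ 1/4. If (α*, β*) ∈ ℝⁿ×ℝⁿ is a global maximizer of the entropic UOT dual function f_{u,K} over ℝⁿ×ℝⁿ, then ∑_{i,j} e^{α*_i/ε} K_{ij} e^{β*_j/ε} ≤ c₇(∑_i a_i + ∑_j b_j)/ε + ∑_{i,j} K_{ij}/n², and in particular ∑_{i,j} e^{α*_i/ε} K_{ij} e^{β*_j/ε} < 1. -/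
open scoped BigOperators

/-- The entropic UOT dual function
`f_{u,K}(α, β) = ∑_i a_i − λ ∑_i a_i e^{−α_i/λ} + ∑_j b_j − λ ∑_j b_j e^{−β_j/λ}
  − ε ∑_{i,j} e^{α_i/ε} K_{ij} e^{β_j/ε}`. -/
noncomputable def fuDual {n : ℕ} (ε lam : ℝ) (a b : Fin n → ℝ)
    (K : Matrix (Fin n) (Fin n) ℝ) (α β : Fin n → ℝ) : ℝ :=
  ∑ i, a i - lam * ∑ i, a i * Real.exp (-α i / lam)
    + ∑ j, b j - lam * ∑ j, b j * Real.exp (-β j / lam)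
    - ε * ∑ i, ∑ j, Real.exp (α i / ε) * K i j * Real.exp (β j / ε)

/-- Bound (thm2-aKb): at a maximizer of the entropic UOT dual,
`∑_{i,j} e^{α*_i/ε} K_{ij} e^{β*_j/ε} ≤ c₇(∑_i a_i + ∑_j b_j)/ε + ∑_{i,j} K_{ij}/n² < 1`. -/
theorem stmt_8 {n : ℕ} (hn : 1 ≤ n) (ε lam c₆ c₇ : ℝ)
    (hε : 0 < ε) (hlam : 0 < lam) (hc₆ : 0 < c₆) (hc₇ : 0 < c₇)
    (hεlam : ε / lam ≤ c₆) (hlamn : lam ≤ c₇ * (n : ℝ) ^ (-c₆))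
    (a b : Fin n → ℝ) (ha : ∀ i, 0 ≤ a i) (hb : ∀ j, 0 ≤ b j)
    (hab : ∑ i, a i + ∑ j, b j ≤ ε / (2 * c₇))
    (K : Matrix (Fin n) (Fin n) ℝ)
    (hKsum : (∑ i, ∑ j, K i j) / (n : ℝ) ^ 2 ≤ 1 / 4)
    (αs βs : Fin n → ℝ)
    (hmax : ∀ α β : Fin n → ℝ, fuDual ε lam a b K α β ≤ fuDual ε lam a b K αs βs) :
    (∑ i, ∑ j, Real.exp (αs i / ε) * K i j * Real.exp (βs j / ε) ≤
        c₇ * (∑ i, a i + ∑ j, b j) / ε + (∑ i, ∑ j, K i j) / (n : ℝ) ^ 2) ∧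
      ∑ i, ∑ j, Real.exp (αs i / ε) * K i j * Real.exp (βs j / ε) < 1 := by
  have hn' : (1:ℝ) ≤ (n:ℝ) := by exact_mod_cast hn
  have hn0 : (0:ℝ) < (n:ℝ) := lt_of_lt_of_le one_pos hn'
  set A := ∑ i, a i with hA
  set B := ∑ j, b j with hB
  set S := ∑ i, ∑ j, Real.exp (αs i / ε) * K i j * Real.exp (βs j / ε) with hS
  set T := ∑ i, ∑ j, K i j with hT
  set q : Fin n → ℝ := fun _ => -ε * Real.log n with hq
  set c : ℝ := (n:ℝ) ^ (ε / lam) with hc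
  -- exp (-q i / lam) = c
  have hexp1 : ∀ i : Fin n, Real.exp (-q i / lam) = c := by
    intro i
    rw [hc, Real.rpow_def_of_pos hn0]
    congr 1
    simp [hq]
    ring
  have hexp2 : ∀ i : Fin n, Real.exp (q i / ε) = ((n:ℝ))⁻¹ := by
    intro i
    have : q i / ε = -Real.log n := by
      field_simp [hq]
      ring
    rw [this, Real.exp_neg, Real.exp_log hn0]
  -- value of fuDual at (q, q)
  have hval : fuDual ε lam a b K q q = A - lam * (A * c) + B - lam * (B * c)
      - ε * (T / (n:ℝ) ^ 2) := by
    unfold fuDual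
    have h1 : ∑ i, a i * Real.exp (-q i / lam) = A * c := by
      rw [hA, Finset.sum_mul]
      exact Finset.sum_congr rfl fun i _ => by rw [hexp1 i]
    have h2 : ∑ j, b j * Real.exp (-q j / lam) = B * c := by
      rw [hB, Finset.sum_mul]
      exact Finset.sum_congr rfl fun j _ => by rw [hexp1 j]
    have h3 : ∑ i, ∑ j, Real.exp (q i / ε) * K i j * Real.exp (q j / ε)
        = T / (n:ℝ) ^ 2 := by
      rw [hT, Finset.sum_div]
      refine Finset.sum_congr rfl fun i _ => ?_
      rw [Finset.sum_div]
      refine Finset.sum_congr rfl fun j _ => ?_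
      rw [hexp2 i]
      have hne : ((n:ℝ))⁻¹ * (n:ℝ) = 1 := inv_mul_cancel₀ (ne_of_gt hn0)
      rw [eq_div_iff (by positivity : ((n:ℝ)^2) ≠ 0)]
      linear_combination K i j * ((↑n)⁻¹ * ↑n + 1) * hne
    rw [h1, h2, h3]
  -- upper bound on fuDual at maximizer
  have hub : fuDual ε lam a b K αs βs ≤ A + B - ε * S := by
    unfold fuDual
    have h1 : 0 ≤ ∑ i, a i * Real.exp (-αs i / lam) :=
      Finset.sum_nonneg fun i _ => mul_nonneg (ha i) (Real.exp_pos _).le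
    have h2 : 0 ≤ ∑ j, b j * Real.exp (-βs j / lam) :=
      Finset.sum_nonneg fun j _ => mul_nonneg (hb j) (Real.exp_pos _).le
    rw [← hA, ← hB, ← hS]
    nlinarith [hlam]
  have hchain := hmax q q
  rw [hval] at hchain
  -- lam * c ≤ c₇
  have hc1 : c ≤ (n:ℝ) ^ c₆ := Real.rpow_le_rpow_of_exponent_le hn' hεlam
  have hcpos : 0 < c := Real.rpow_pos_of_pos hn0 _
  have hlc : lam * c ≤ c₇ := by
    have h1 : lam * c ≤ (c₇ * (n:ℝ) ^ (-c₆)) * ((n:ℝ) ^ c₆) := by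
      apply mul_le_mul hlamn hc1 hcpos.le
      positivity
    have h2 : (n:ℝ) ^ (-c₆) * (n:ℝ) ^ c₆ = 1 := by
      rw [← Real.rpow_add hn0]
      simp
    nlinarith
  have hApos : 0 ≤ A := Finset.sum_nonneg fun i _ => ha i
  have hBpos : 0 ≤ B := Finset.sum_nonneg fun j _ => hb j
  -- ε * S ≤ c₇ * (A + B) + ε * (T / n²)
  have hmain : ε * S ≤ c₇ * (A + B) + ε * (T / (n:ℝ) ^ 2) := by
    nlinarith [hub, hchain, hlc, hApos, hBpos, hcpos]
  have hgoal1 : S ≤ c₇ * (A + B) / ε + T / (n:ℝ) ^ 2 := by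
    rw [div_add' _ _ _ (ne_of_gt hε)] at *
    rw [le_div_iff₀ hε]
    nlinarith
  refine ⟨hgoal1, ?_⟩
  have h2 : c₇ * (A + B) / ε ≤ 1 / 2 := by
    rw [div_le_iff₀ hε]
    have h3 : c₇ * (A + B) ≤ c₇ * (ε / (2 * c₇)) := by
      exact mul_le_mul_of_nonneg_left hab hc₇.le
    have h4 : c₇ * (ε / (2 * c₇)) = ε / 2 := by field_simp
    linarith
  linarith [hgoal1]
end

section
/- Let n ≥ 2, let ε, λ > 0, and let c₃, c₄ > 0 be constants with c₃ c₄ ≤ n. Let a, b ∈ ℝⁿ have strictly positive entries, let C be an n×n real matrix with nonnegative entries, and let K̃ be an n×n real matrix with nonnegative entries such that: (1) for every (i,j) with K̃_ij > 0, e^{−C_ij/ε} ≤ K̃_ij ≤ (n/(c₃c₄)) e^{−C_ij/ε}; (2) every row and every column of K̃ contains at least one strictly positive entry. Suppose ᾱ, β̄ ∈ ℝⁿ satisfy the fixed-point equations ᾱ_i/λ = log(a_i) − log( ∑_{j=1}^n e^{(ᾱ_i + β̄_j)/ε} K̃_ij ) for every i, and β̄_j/λ = log(b_j) − log( ∑_{i=1}^n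 e^{(ᾱ_i + β̄_j)/ε} K̃_ij ) for every j. Then max{‖ᾱ‖_∞, ‖β̄‖_∞} ≤ λ R′, where R′ = max{max_i |log a_i|, max_j |log b_j|} + log(n) + max{log(n) + log(1/(c₃c₄)), max_{i,j} C_ij / ε}. -/
open scoped BigOperators

lemma aux_bound {n : ℕ} (hn : 2 ≤ n) {ε lam c₃ c₄ M Cmax : ℝ}
    (hε : 0 < ε) (hlam : 0 < lam) (hc₃ : 0 < c₃) (hc₄ : 0 < c₄)
    (a : Fin n → ℝ) (ha : ∀ i, 0 < a i) (hM : ∀ i, |Real.log (a i)| ≤ M)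
    (hCmax0 : 0 ≤ Cmax)
    (C Kt : Matrix (Fin n) (Fin n) ℝ)
    (hC : ∀ i j, 0 ≤ C i j) (hCle : ∀ i j, C i j ≤ Cmax)
    (hKt : ∀ i j, 0 ≤ Kt i j)
    (hKtbound : ∀ i j, 0 < Kt i j → Real.exp (-C i j / ε) ≤ Kt i j ∧
      Kt i j ≤ ((n : ℝ) / (c₃ * c₄)) * Real.exp (-C i j / ε))
    (u v : Fin n → ℝ) (i : Fin n)
    (hrowi : ∃ j, 0 < Kt i j)
    (hdom : ∀ j, |v j| ≤ |u i|)
    (hfix : u i / lam = Real.log (a i)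
      - Real.log (∑ j, Real.exp ((u i + v j) / ε) * Kt i j)) :
    |u i| ≤ lam * (M + Real.log n
      + max (Real.log n + Real.log (1 / (c₃ * c₄))) (Cmax / ε)) := by
  have hn2 : (2 : ℝ) ≤ (n : ℝ) := by exact_mod_cast hn
  have hnpos : (0 : ℝ) < n := by linarith
  have hlogn : 0 ≤ Real.log n := Real.log_nonneg (by linarith)
  have hcc : 0 < c₃ * c₄ := mul_pos hc₃ hc₄
  obtain ⟨j0, hj0⟩ := hrowi
  set S := ∑ j, Real.exp ((u i + v j) / ε) * Kt i j with hSdef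
  have hterm : ∀ j ∈ Finset.univ, (0:ℝ) ≤ Real.exp ((u i + v j) / ε) * Kt i j :=
    fun j _ => mul_nonneg (Real.exp_pos _).le (hKt i j)
  have hS0 : 0 < S :=
    Finset.sum_pos' hterm ⟨j0, Finset.mem_univ j0, mul_pos (Real.exp_pos _) hj0⟩
  have hMi := abs_le.mp (hM i)
  have hmaxC : Cmax / ε ≤ max (Real.log n + Real.log (1 / (c₃ * c₄))) (Cmax / ε) :=
    le_max_right _ _
  have hmaxL : Real.log n + Real.log (1 / (c₃ * c₄)) ≤
      max (Real.log n + Real.log (1 / (c₃ * c₄))) (Cmax / ε) := le_max_left _ _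
  rcases le_or_gt 0 (u i) with hcase | hcase
  · -- u i ≥ 0: lower bound on S
    have huabs : |u i| = u i := abs_of_nonneg hcase
    have hvj : -(u i) ≤ v j0 := by
      have h1 : |v j0| ≤ u i := huabs ▸ hdom j0
      exact (abs_le.mp h1).1
    have harg : 0 ≤ (u i + v j0) / ε := div_nonneg (by linarith) hε.le
    have hSlb : Real.exp (-C i j0 / ε) ≤ S := by
      have h1 : Real.exp (-C i j0 / ε) ≤ Kt i j0 := (hKtbound i j0 hj0).1
      have h2 : Kt i j0 ≤ Real.exp ((u i + v j0) / ε) * Kt i j0 :=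
        le_mul_of_one_le_left (hKt i j0) (Real.one_le_exp harg)
      have h3 : Real.exp ((u i + v j0) / ε) * Kt i j0 ≤ S :=
        Finset.single_le_sum hterm (Finset.mem_univ j0)
      linarith
    have hlogS : -(Cmax / ε) ≤ Real.log S := by
      have h1 : Real.log (Real.exp (-C i j0 / ε)) ≤ Real.log S :=
        Real.log_le_log (Real.exp_pos _) hSlb
      rw [Real.log_exp] at h1
      have h2 : -(Cmax) / ε ≤ -C i j0 / ε := by
        have hnum : -Cmax ≤ -C i j0 := by linarith [hCle i j0]
        exact (div_le_div_iff_of_pos_right hε).mpr hnum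
      calc -(Cmax / ε) = -(Cmax) / ε := by ring
        _ ≤ -C i j0 / ε := h2
        _ ≤ Real.log S := h1
    have hstep : u i / lam ≤ M + Real.log n
        + max (Real.log n + Real.log (1 / (c₃ * c₄))) (Cmax / ε) := by
      rw [hfix]
      have : Real.log (a i) - Real.log S ≤ M + Cmax / ε := by linarith
      linarith
    rw [huabs]
    have := (div_le_iff₀ hlam).mp hstep
    linarith [this]
  · -- u i < 0: upper bound on S
    have huabs : |u i| = -(u i) := abs_of_neg hcase
    have hSub : S ≤ (n : ℝ) * ((n : ℝ) / (c₃ * c₄)) := by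
      have hle : ∀ j ∈ Finset.univ,
          Real.exp ((u i + v j) / ε) * Kt i j ≤ (n : ℝ) / (c₃ * c₄) := by
        intro j _
        have hvj : v j ≤ -(u i) := by
          have h1 : |v j| ≤ -(u i) := huabs ▸ hdom j
          exact (abs_le.mp h1).2
        have hexp1 : Real.exp ((u i + v j) / ε) ≤ 1 := by
          apply Real.exp_le_one_iff.mpr
          exact div_nonpos_of_nonpos_of_nonneg (by linarith) hε.le
        have hKtle : Kt i j ≤ (n : ℝ) / (c₃ * c₄) := by
          rcases (hKt i j).eq_or_lt with h | h
          · rw [← h]; positivity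
          · have h2 := (hKtbound i j h).2
            have h3 : Real.exp (-C i j / ε) ≤ 1 := by
              apply Real.exp_le_one_iff.mpr
              exact div_nonpos_of_nonpos_of_nonneg (by linarith [hC i j]) hε.le
            calc Kt i j ≤ ((n : ℝ) / (c₃ * c₄)) * Real.exp (-C i j / ε) := h2
              _ ≤ ((n : ℝ) / (c₃ * c₄)) * 1 := by
                  apply mul_le_mul_of_nonneg_left h3 (by positivity)
              _ = (n : ℝ) / (c₃ * c₄) := mul_one _
        calc Real.exp ((u i + v j) / ε) * Kt i j ≤ 1 * Kt i j :=
              mul_le_mul_of_nonneg_right hexp1 (hKt i j)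
          _ = Kt i j := one_mul _
          _ ≤ (n : ℝ) / (c₃ * c₄) := hKtle
      calc S ≤ ∑ _j : Fin n, (n : ℝ) / (c₃ * c₄) := Finset.sum_le_sum hle
        _ = (n : ℝ) * ((n : ℝ) / (c₃ * c₄)) := by
            rw [Finset.sum_const, Finset.card_univ, Fintype.card_fin, nsmul_eq_mul]
    have hlogS : Real.log S ≤ Real.log n + (Real.log n + Real.log (1 / (c₃ * c₄))) := by
      have h1 : Real.log S ≤ Real.log ((n : ℝ) * ((n : ℝ) / (c₃ * c₄))) :=
        Real.log_le_log hS0 hSub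
      have h2 : Real.log ((n : ℝ) * ((n : ℝ) / (c₃ * c₄)))
          = Real.log n + (Real.log n + Real.log (1 / (c₃ * c₄))) := by
        rw [Real.log_mul (by positivity) (by positivity),
          Real.log_div (by positivity) (by positivity), one_div, Real.log_inv]
        ring
      linarith
    have hstep : -(u i) / lam ≤ M + Real.log n
        + max (Real.log n + Real.log (1 / (c₃ * c₄))) (Cmax / ε) := by
      have h1 : -(u i) / lam = Real.log S - Real.log (a i) := by
        rw [neg_div]; rw [hfix]; ring
      rw [h1]; linarith
    rw [huabs]
    have := (div_le_iff₀ hlam).mp hstep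
    linarith [this]

/-- Lemma A4: infinity-norm bound on the optimal dual variables of the
sparsified entropic unbalanced optimal transport problem. -/
theorem stmt_9 {n : ℕ} (hn : 2 ≤ n) (ε lam : ℝ) (hε : 0 < ε) (hlam : 0 < lam)
    (c₃ c₄ : ℝ) (hc₃ : 0 < c₃) (hc₄ : 0 < c₄) (hc₃c₄ : c₃ * c₄ ≤ n)
    (a b : Fin n → ℝ) (ha : ∀ i, 0 < a i) (hb : ∀ j, 0 < b j)
    (C : Matrix (Fin n) (Fin n) ℝ) (hC : ∀ i j, 0 ≤ C i j)
    (Kt : Matrix (Fin n) (Fin n) ℝ) (hKt : ∀ i j, 0 ≤ Kt i j)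
    (hKtbound : ∀ i j, 0 < Kt i j →
      Real.exp (-C i j / ε) ≤ Kt i j ∧
        Kt i j ≤ (n / (c₃ * c₄)) * Real.exp (-C i j / ε))
    (hrow : ∀ i, ∃ j, 0 < Kt i j) (hcol : ∀ j, ∃ i, 0 < Kt i j)
    (αb βb : Fin n → ℝ)
    (hfixα : ∀ i, αb i / lam =
      Real.log (a i) - Real.log (∑ j, Real.exp ((αb i + βb j) / ε) * Kt i j))
    (hfixβ : ∀ j, βb j / lam =
      Real.log (b j) - Real.log (∑ i, Real.exp ((αb i + βb j) / ε) * Kt i j)) :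
    max (⨆ i, |αb i|) (⨆ j, |βb j|) ≤
      lam * (max (⨆ i, |Real.log (a i)|) (⨆ j, |Real.log (b j)|) + Real.log n
        + max (Real.log n + Real.log (1 / (c₃ * c₄))) ((⨆ i, ⨆ j, C i j) / ε)) := by
  have hne : Nonempty (Fin n) := ⟨⟨0, by omega⟩⟩
  have hbdd : ∀ f : Fin n → ℝ, BddAbove (Set.range f) :=
    fun f => (Set.finite_range f).bddAbove
  set M := max (⨆ i, |Real.log (a i)|) (⨆ j, |Real.log (b j)|) with hMdef
  set Cmax := ⨆ i, ⨆ j, C i j with hCmaxdef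
  have hMa : ∀ i, |Real.log (a i)| ≤ M := fun i =>
    le_trans (le_ciSup (f := fun i => |Real.log (a i)|) (hbdd _) i) (le_max_left _ _)
  have hMb : ∀ j, |Real.log (b j)| ≤ M := fun j =>
    le_trans (le_ciSup (f := fun j => |Real.log (b j)|) (hbdd _) j) (le_max_right _ _)
  have hCle : ∀ i j, C i j ≤ Cmax := by
    intro i j
    exact le_trans (le_ciSup (f := fun j => C i j) (hbdd _) j)
      (le_ciSup (f := fun i => ⨆ j, C i j) (hbdd _) i)
  have hCmax0 : 0 ≤ Cmax := le_trans (hC ⟨0, by omega⟩ ⟨0, by omega⟩)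
    (hCle ⟨0, by omega⟩ ⟨0, by omega⟩)
  obtain ⟨i0, hi0⟩ := Finite.exists_max fun i => |αb i|
  obtain ⟨j0, hj0⟩ := Finite.exists_max fun j => |βb j|
  rcases le_total (|βb j0|) (|αb i0|) with hcmp | hcmp
  · have hdom : ∀ j, |βb j| ≤ |αb i0| := fun j => le_trans (hj0 j) hcmp
    have hmain := aux_bound hn hε hlam hc₃ hc₄ a ha hMa hCmax0 C Kt hC hCle hKt
      hKtbound αb βb i0 (hrow i0) hdom (hfixα i0)
    apply max_le
    · exact ciSup_le fun i => (hi0 i).trans hmain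
    · exact ciSup_le fun j => (hdom j).trans hmain
  · have hdom : ∀ i, |αb i| ≤ |βb j0| := fun i => le_trans (hi0 i) hcmp
    have hfix' : βb j0 / lam = Real.log (b j0)
        - Real.log (∑ i, Real.exp ((βb j0 + αb i) / ε) * (fun p q => Kt q p) j0 i) := by
      simpa [add_comm] using hfixβ j0
    have hmain := aux_bound hn hε hlam hc₃ hc₄ b hb hMb hCmax0
      (fun p q => C q p) (fun p q => Kt q p)
      (fun p q => hC q p) (fun p q => hCle q p) (fun p q => hKt q p)
      (fun p q h => hKtbound q p h) βb αb j0 (hcol j0) hdom hfix'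
    apply max_le
    · exact ciSup_le fun i => (hdom i).trans hmain
    · exact ciSup_le fun j => (hj0 j).trans hmain
end

section
/- Let λ, ε > 0, let K be an n×n real matrix with nonnegative entries, let u, v ∈ ℝⁿ have nonnegative entries, and let a, b ∈ ℝⁿ be defined by a_i = u_i^{(λ+ε)/λ} ∑_{j=1}^n K_ij v_j for every i and b_j = v_j^{(λ+ε)/λ} ∑_{i=1}^n K_ij u_i for every j. Then for all i, j: u_i K_ij v_j ≤ (a_i b_j)^{λ/(2λ+ε)} · K_ij^{ε/(2λ+ε)}, where the powers are real powers. -/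
open scoped BigOperators

/-- Entrywise bound for the entropic UOT plan: if `u, v` are the Sinkhorn scaling
factors, i.e. `a_i = u_i^{(λ+ε)/λ} ∑_j K_ij v_j` and `b_j = v_j^{(λ+ε)/λ} ∑_i K_ij u_i`,
then `u_i K_ij v_j ≤ (a_i b_j)^{λ/(2λ+ε)} K_ij^{ε/(2λ+ε)}`, with real powers. -/
theorem stmt_12 {n : ℕ} (lam ε : ℝ) (hlam : 0 < lam) (hε : 0 < ε)
    (K : Matrix (Fin n) (Fin n) ℝ) (hK : ∀ i j, 0 ≤ K i j)
    (u v : Fin n → ℝ) (hu : ∀ i, 0 ≤ u i) (hv : ∀ j, 0 ≤ v j)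
    (a b : Fin n → ℝ)
    (ha : ∀ i, a i = u i ^ ((lam + ε) / lam) * ∑ j, K i j * v j)
    (hb : ∀ j, b j = v j ^ ((lam + ε) / lam) * ∑ i, K i j * u i) :
    ∀ i j, u i * K i j * v j ≤
      (a i * b j) ^ (lam / (2 * lam + ε)) * K i j ^ (ε / (2 * lam + ε)) := by
  intro i j
  set x := u i with hx
  set y := v j with hy
  set c := K i j with hc
  have hx0 : 0 ≤ x := hu i
  have hy0 : 0 ≤ y := hv j
  have hc0 : 0 ≤ c := hK i j
  have hq : (0:ℝ) < 2 * lam + ε := by linarith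
  set q : ℝ := (2 * lam + ε) / lam with hqdef
  set α : ℝ := lam / (2 * lam + ε) with hαdef
  have hα0 : 0 ≤ α := le_of_lt (div_pos hlam hq)
  -- a i ≥ x^{(λ+ε)/λ} * (c * y)
  have hsum1 : c * y ≤ ∑ j', K i j' * v j' :=
    Finset.single_le_sum (fun j' _ => mul_nonneg (hK i j') (hv j'))
      (Finset.mem_univ j)
  have hsum2 : c * x ≤ ∑ i', K i' j * u i' :=
    Finset.single_le_sum (fun i' _ => mul_nonneg (hK i' j) (hu i'))
      (Finset.mem_univ i)
  have hl0 : lam ≠ 0 := hlam.ne'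
  have hxp : (0:ℝ) ≤ x ^ ((lam + ε) / lam) := Real.rpow_nonneg hx0 _
  have hyp : (0:ℝ) ≤ y ^ ((lam + ε) / lam) := Real.rpow_nonneg hy0 _
  have haineq : x ^ ((lam + ε) / lam) * (c * y) ≤ a i := by
    rw [ha i]; exact mul_le_mul_of_nonneg_left hsum1 hxp
  have hbineq : y ^ ((lam + ε) / lam) * (c * x) ≤ b j := by
    rw [hb j]; exact mul_le_mul_of_nonneg_left hsum2 hyp
  -- product bound
  have hprod : x ^ q * y ^ q * c ^ (2:ℝ) ≤ a i * b j := by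
    have hexp : (lam + ε) / lam + 1 = q := by
      rw [hqdef, div_add' _ _ _ hl0]
      congr 1
      ring
    have h1 : x ^ q = x ^ ((lam + ε) / lam) * x := by
      rw [← Real.rpow_add_one' hx0 (by rw [hexp, hqdef]; positivity), hexp]
    have h2 : y ^ q = y ^ ((lam + ε) / lam) * y := by
      rw [← Real.rpow_add_one' hy0 (by rw [hexp, hqdef]; positivity), hexp]
    have h3 : c ^ (2:ℝ) = c * c := by
      rw [show (2:ℝ) = ((2:ℕ):ℝ) by norm_num, Real.rpow_natCast]; ring
    calc x ^ q * y ^ q * c ^ (2:ℝ)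
        = (x ^ ((lam + ε) / lam) * (c * y)) * (y ^ ((lam + ε) / lam) * (c * x)) := by
          rw [h1, h2, h3]; ring
      _ ≤ a i * b j := by
          apply mul_le_mul haineq hbineq ?_ ?_
          · positivity
          · exact le_trans (by positivity) haineq
  -- raise to power α
  have hbase0 : (0:ℝ) ≤ x ^ q * y ^ q * c ^ (2:ℝ) := by positivity
  have hmono := Real.rpow_le_rpow hbase0 hprod hα0
  have hqα : q * α = 1 := by
    rw [hqdef, hαdef]; field_simp
  have hsimp : (x ^ q * y ^ q * c ^ (2:ℝ)) ^ α = x * y * c ^ (2 * α) := by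
    rw [Real.mul_rpow (by positivity) (by positivity),
        Real.mul_rpow (by positivity) (by positivity),
        ← Real.rpow_mul hx0, ← Real.rpow_mul hy0, ← Real.rpow_mul hc0, hqα,
        Real.rpow_one, Real.rpow_one]
  have hsum : 2 * α + ε / (2 * lam + ε) = 1 := by
    rw [hαdef]; field_simp
  have hcc : c ^ (2 * α) * c ^ (ε / (2 * lam + ε)) = c := by
    rw [← Real.rpow_add' hc0 (by rw [hsum]; norm_num), hsum, Real.rpow_one]
  calc x * c * y = x * y * c ^ (2 * α) * c ^ (ε / (2 * lam + ε)) := by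
        linear_combination (-(x * y)) * hcc
    _ ≤ (a i * b j) ^ α * c ^ (ε / (2 * lam + ε)) := by
        apply mul_le_mul_of_nonneg_right _ (Real.rpow_nonneg hc0 _)
        rw [← hsimp]; exact hmono
end
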